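/- For A, B positive semidefinite forming a monotone pair and any unit vector h, ‖Ah‖·‖Bh‖ ≤ ‖ABh‖ and ⟨h, Ah⟩·⟨h, Bh⟩ ≤ ⟨h, ABh⟩. -/

import Mathlib

/-!
Diagonalise `C = U D U*`. With `v = U* h`, the weights `w i = ‖v i‖²` form a probability vector,
and `A = f(C)`, `B = g(C)`, `AB = (fg)(C)` act diagonally in this basis with entries
`a i = f(λ i)`, `b i = g(λ i)` and `a i * b i`. Hence `⟨h, Xh⟩ = ∑ w i x i` and
`‖Xh‖² = ∑ w i (x i)²` for each of them, and both inequalities are the weighted Chebyshev sum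
inequality `(∑ w a)(∑ w b) ≤ ∑ w a b`, applied to `a, b` and to `a², b²`: the sequences are
similarly ordered because `f, g` are monotone, and squaring preserves this because `a, b ≥ 0`.
-/

open Matrix ComplexOrder

/-- Apply a real function to a Hermitian matrix via the spectral decomposition. -/
noncomputable def hermFun {n : ℕ} {C : Matrix (Fin n) (Fin n) ℂ} (hC : C.IsHermitian)
    (f : ℝ → ℝ) : Matrix (Fin n) (Fin n) ℂ :=
  (hC.eigenvectorUnitary : Matrix (Fin n) (Fin n) ℂ) *
    Matrix.diagonal (fun i => (f (hC.eigenvalues i) : ℂ)) *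
    (star (hC.eigenvectorUnitary : Matrix (Fin n) (Fin n) ℂ))

/-- `(A, B)` is a monotone pair: `A = f(C)`, `B = g(C)` for a Hermitian `C` and
nondecreasing real functions `f`, `g`. -/
def MonotonePair {n : ℕ} (A B : Matrix (Fin n) (Fin n) ℂ) : Prop :=
  ∃ C : Matrix (Fin n) (Fin n) ℂ, ∃ hC : C.IsHermitian, ∃ f g : ℝ → ℝ,
    Monotone f ∧ Monotone g ∧ A = hermFun hC f ∧ B = hermFun hC g

/-- `(A, B)` is an antimonotone pair: `A = f(C)`, `B = g(C)` for a Hermitian `C`,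
`f` nondecreasing and `g` nonincreasing. -/
def AntimonotonePair {n : ℕ} (A B : Matrix (Fin n) (Fin n) ℂ) : Prop :=
  ∃ C : Matrix (Fin n) (Fin n) ℂ, ∃ hC : C.IsHermitian, ∃ f g : ℝ → ℝ,
    Monotone f ∧ Antitone g ∧ A = hermFun hC f ∧ B = hermFun hC g

/-- The Frobenius (Hilbert–Schmidt) norm `(Tr X*X)^(1/2)`. -/
noncomputable def frobNorm {n : ℕ} (X : Matrix (Fin n) (Fin n) ℂ) : ℝ :=
  Real.sqrt ((Matrix.trace (Xᴴ * X)).re)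

open Finset in
theorem MonovaryOn.sum_mul_sum_le_sum_mul_sum_of_nonneg {ι R : Type*} [CommRing R] [LinearOrder R]
    [IsStrictOrderedRing R] {s : Finset ι} {w x y : ι → R} (hxy : MonovaryOn x y s)
    (hw : ∀ i ∈ s, 0 ≤ w i) :
    (∑ i ∈ s, w i * x i) * (∑ i ∈ s, w i * y i) ≤ (∑ i ∈ s, w i) * ∑ i ∈ s, w i * (x i * y i) := by
  set f : ι → ι → R := fun i j => w i * (w j * (x j * y j))
  set g : ι → ι → R := fun i j => w i * x i * (w j * y j)
  have hsum : 0 ≤ ∑ i ∈ s, ∑ j ∈ s, w i * w j * ((x j - x i) * (y j - y i)) :=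
    sum_nonneg fun i hi => sum_nonneg fun j hj =>
      mul_nonneg (mul_nonneg (hw i hi) (hw j hj)) (hxy.sub_mul_sub_nonneg hi hj)
  have hexpand : ∑ i ∈ s, ∑ j ∈ s, w i * w j * ((x j - x i) * (y j - y i)) =
      2 * (∑ i ∈ s, ∑ j ∈ s, f i j - ∑ i ∈ s, ∑ j ∈ s, g i j) := calc
    _ = ∑ i ∈ s, ∑ j ∈ s, (f i j + f j i - g i j - g j i) :=
      sum_congr rfl fun i _ => sum_congr rfl fun j _ => by ring
    _ = _ := by
      simp only [sum_add_distrib, sum_sub_distrib]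
      rw [sum_comm (f := fun i j => f j i), sum_comm (f := fun i j => g j i)]
      ring
  simp only [f, g, ← sum_mul_sum] at hexpand
  linarith

theorem Monovary.pow_of_nonneg {ι R : Type*} [Semiring R] [LinearOrder R] [IsStrictOrderedRing R]
    {a b : ι → R} (h : Monovary a b) (ha : 0 ≤ a) (hb : 0 ≤ b) (k : ℕ) :
    Monovary (a ^ k) (b ^ k) := fun i j hij =>
  pow_le_pow_left₀ (ha i) (h (lt_of_pow_lt_pow_left₀ k (hb j) hij)) k

theorem Unitary.conj_mul_conj_of_mem {R : Type*} [Monoid R] [StarMul R] {u : R}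
    (hu : u ∈ unitary R) (x y : R) : u * x * star u * (u * y * star u) = u * (x * y) * star u := by
  simp [mul_assoc, ← mul_assoc (star u) u, Unitary.star_mul_self_of_mem hu]

namespace Matrix

variable {ι 𝕜 : Type*} [Fintype ι] [DecidableEq ι] [RCLike 𝕜]

theorem _root_.IsUnit.posSemidef_star_right_conjugate_diagonal_iff {U : Matrix ι ι 𝕜}
    (hU : IsUnit U) {d : ι → ℝ} :
    (U * diagonal (RCLike.ofReal ∘ d) * star U).PosSemidef ↔ 0 ≤ d := by
  simp [hU.posSemidef_star_right_conjugate_iff, posSemidef_diagonal_iff, Pi.le_def]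

theorem norm_toEuclideanLin_of_mem_unitaryGroup {U : Matrix ι ι 𝕜} (hU : U ∈ unitaryGroup ι 𝕜)
    (x : EuclideanSpace 𝕜 ι) : ‖toEuclideanLin U x‖ = ‖x‖ :=
  (toEuclideanCLM (𝕜 := 𝕜) U).norm_map_of_mem_unitary (Unitary.map_mem _ hU) x

theorem inner_toEuclideanLin_eq_inner_star (M : Matrix ι ι 𝕜) (x y : EuclideanSpace 𝕜 ι) :
    inner 𝕜 x (toEuclideanLin M y) = inner 𝕜 (toEuclideanLin (star M) x) y := by
  rw [star_eq_conjTranspose, toEuclideanLin_conjTranspose_eq_adjoint, LinearMap.adjoint_inner_left]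

theorem re_inner_toEuclideanLin_diagonal (d : ι → ℝ) (x : EuclideanSpace 𝕜 ι) :
    RCLike.re (inner 𝕜 x (toEuclideanLin (diagonal (RCLike.ofReal ∘ d)) x)) =
      ∑ i, ‖x i‖ ^ 2 * d i := by
  simp only [PiLp.inner_apply, ofLp_toLpLin, toLin'_apply, mulVec_diagonal, Function.comp_apply,
    map_sum]
  refine Finset.sum_congr rfl fun i _ => ?_
  rw [RCLike.inner_apply, mul_assoc, RCLike.mul_conj, ← RCLike.ofReal_pow, ← RCLike.ofReal_mul,
    RCLike.ofReal_re, mul_comm]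

theorem norm_sq_toEuclideanLin_diagonal (d : ι → ℝ) (x : EuclideanSpace 𝕜 ι) :
    ‖toEuclideanLin (diagonal (RCLike.ofReal ∘ d)) x‖ ^ 2 = ∑ i, ‖x i‖ ^ 2 * d i ^ 2 := by
  simp [EuclideanSpace.norm_sq_eq, mulVec_diagonal, norm_mul, mul_pow, mul_comm]

theorem re_inner_toEuclideanLin_conj_diagonal (U : Matrix ι ι 𝕜) (d : ι → ℝ)
    (x : EuclideanSpace 𝕜 ι) :
    RCLike.re (inner 𝕜 x (toEuclideanLin (U * diagonal (RCLike.ofReal ∘ d) * star U) x)) =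
      ∑ i, ‖toEuclideanLin (star U) x i‖ ^ 2 * d i := by
  simp only [toLpLin_mul_same, LinearMap.comp_apply]
  rw [inner_toEuclideanLin_eq_inner_star, re_inner_toEuclideanLin_diagonal]

theorem norm_sq_toEuclideanLin_unitary_conj_diagonal {U : Matrix ι ι 𝕜}
    (hU : U ∈ unitaryGroup ι 𝕜) (d : ι → ℝ) (x : EuclideanSpace 𝕜 ι) :
    ‖toEuclideanLin (U * diagonal (RCLike.ofReal ∘ d) * star U) x‖ ^ 2 =
      ∑ i, ‖toEuclideanLin (star U) x i‖ ^ 2 * d i ^ 2 := by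
  simp only [toLpLin_mul_same, LinearMap.comp_apply]
  rw [norm_toEuclideanLin_of_mem_unitaryGroup hU, norm_sq_toEuclideanLin_diagonal]

theorem sum_norm_sq_toEuclideanLin_of_mem_unitaryGroup {U : Matrix ι ι 𝕜}
    (hU : U ∈ unitaryGroup ι 𝕜) (x : EuclideanSpace 𝕜 ι) :
    ∑ i, ‖toEuclideanLin U x i‖ ^ 2 = ‖x‖ ^ 2 := by
  rw [← EuclideanSpace.norm_sq_eq, norm_toEuclideanLin_of_mem_unitaryGroup hU]

end Matrix

section hermFun

variable {n : ℕ} {C : Matrix (Fin n) (Fin n) ℂ} (hC : C.IsHermitian)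

-- `hermFun` is written with the coercion `ℝ → ℂ`; the lemmas above use `RCLike.ofReal`.
theorem hermFun_eq_conj_diagonal (f : ℝ → ℝ) :
    hermFun hC f = (hC.eigenvectorUnitary : Matrix (Fin n) (Fin n) ℂ) *
      diagonal (RCLike.ofReal ∘ f ∘ hC.eigenvalues) * star (hC.eigenvectorUnitary : Matrix _ _ ℂ) :=
  rfl

theorem hermFun_mul (f g : ℝ → ℝ) : hermFun hC f * hermFun hC g = hermFun hC (f * g) := by
  simp only [hermFun_eq_conj_diagonal,
    Unitary.conj_mul_conj_of_mem hC.eigenvectorUnitary.2, diagonal_mul_diagonal]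
  congr
  ext i
  simp

end hermFun

theorem chebyshev_vector_inequalities {n : ℕ} (A B : Matrix (Fin n) (Fin n) ℂ)
    (hA : A.PosSemidef) (hB : B.PosSemidef) (hmono : MonotonePair A B)
    (h : EuclideanSpace ℂ (Fin n)) (hh : ‖h‖ = 1) :
    ‖Matrix.toEuclideanLin A h‖ * ‖Matrix.toEuclideanLin B h‖ ≤
        ‖Matrix.toEuclideanLin (A * B) h‖ ∧
      (inner ℂ h (Matrix.toEuclideanLin A h) : ℂ).re *
          (inner ℂ h (Matrix.toEuclideanLin B h) : ℂ).re ≤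
        (inner ℂ h (Matrix.toEuclideanLin (A * B) h) : ℂ).re := by
  obtain ⟨C, hC, f, g, hf, hg, rfl, rfl⟩ := hmono
  have hU := hC.eigenvectorUnitary.2
  set w := fun i =>
    ‖toEuclideanLin (star (hC.eigenvectorUnitary : Matrix (Fin n) (Fin n) ℂ)) h i‖ ^ 2
  have hw : ∑ i, w i = 1 := by
    rw [sum_norm_sq_toEuclideanLin_of_mem_unitaryGroup (Unitary.star_mem hU), hh, one_pow]
  have cheb : ∀ {x y : Fin n → ℝ}, Monovary x y →
      (∑ i, w i * x i) * (∑ i, w i * y i) ≤ ∑ i, w i * (x i * y i) := fun hxy => by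
    simpa only [hw, one_mul] using (hxy.monovaryOn (Finset.univ : Finset (Fin n))
      ).sum_mul_sum_le_sum_mul_sum_of_nonneg (w := w) fun i _ => sq_nonneg _
  have ha : 0 ≤ f ∘ hC.eigenvalues :=
    Unitary.isUnit_coe.posSemidef_star_right_conjugate_diagonal_iff.mp hA
  have hb : 0 ≤ g ∘ hC.eigenvalues :=
    Unitary.isUnit_coe.posSemidef_star_right_conjugate_diagonal_iff.mp hB
  have hfg : Monovary (f ∘ hC.eigenvalues) (g ∘ hC.eigenvalues) := (hf.monovary hg).comp_right _
  rw [hermFun_mul]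
  constructor
  · rw [← pow_le_pow_iff_left₀ (by positivity) (by positivity) two_ne_zero, mul_pow]
    simp only [hermFun_eq_conj_diagonal, norm_sq_toEuclideanLin_unitary_conj_diagonal hU,
      Function.comp_apply, Pi.mul_apply, mul_pow]
    exact cheb (hfg.pow_of_nonneg ha hb 2)
  · simp only [hermFun_eq_conj_diagonal, ← RCLike.re_to_complex,
      re_inner_toEuclideanLin_conj_diagonal, Function.comp_apply, Pi.mul_apply]
    exact cheb hfg
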